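/- arXiv:1012.1429 — 7 statements merged into one kernel-verified Lean document; each statement's English description precedes it below -/
import Mathlib

section
/- Let x, y, z, u : ℂ → ℂ be differentiable and satisfy x' = (u + y² + z²)x, y' = (u + y² - 2z²)y, z' = (u - 2y² + z²)z, u' = u² - y⁴ + y²z² - z⁴. Then at every point where x ≠ 0, the function (y² - z²)/x² has vanishing derivative (it is a first integral). -/
/-! Both `x²` and `y² - z²` satisfy the same linear equation `w' = 2(u + y² + z²) w`, because
`y⁴ - z⁴ = (y² - z²)(y² + z²)`; a quotient of two solutions of one linear equation is constant. -/

theorem HasDerivAt.div_eq_zero_of_same_logDeriv {𝕜 : Type*} [NontriviallyNormedField 𝕜]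
    {f g : 𝕜 → 𝕜} {c t : 𝕜} (hf : HasDerivAt f (c * f t) t) (hg : HasDerivAt g (c * g t) t)
    (hg0 : g t ≠ 0) : HasDerivAt (fun s => f s / g s) 0 t := by
  refine (hf.div hg hg0).congr_deriv ?_
  field_simp
  ring

theorem system19_integral_general (x y z u : ℂ → ℂ)
    (hx : Differentiable ℂ x) (hy : Differentiable ℂ y)
    (hz : Differentiable ℂ z)
    (hdx : ∀ τ, deriv x τ = (u τ + (y τ) ^ 2 + (z τ) ^ 2) * x τ)
    (hdy : ∀ τ, deriv y τ = (u τ + (y τ) ^ 2 - 2 * (z τ) ^ 2) * y τ)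
    (hdz : ∀ τ, deriv z τ = (u τ - 2 * (y τ) ^ 2 + (z τ) ^ 2) * z τ) :
    ∀ τ, x τ ≠ 0 →
      deriv (fun τ => ((y τ) ^ 2 - (z τ) ^ 2) / (x τ) ^ 2) τ = 0 := by
  intro τ hxτ
  set c := 2 * (u τ + y τ ^ 2 + z τ ^ 2)
  have hnum : HasDerivAt (fun s => y s ^ 2 - z s ^ 2) (c * (y τ ^ 2 - z τ ^ 2)) τ := by
    refine (((hy τ).hasDerivAt.pow 2).sub ((hz τ).hasDerivAt.pow 2)).congr_deriv ?_
    rw [hdy, hdz]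
    push_cast
    ring
  have hden : HasDerivAt (fun s => x s ^ 2) (c * x τ ^ 2) τ := by
    refine ((hx τ).hasDerivAt.pow 2).congr_deriv ?_
    rw [hdx]
    push_cast
    ring
  exact (hnum.div_eq_zero_of_same_logDeriv hden (pow_ne_zero 2 hxτ)).deriv

/-- System (19): `(y² - z²)/x²` is a first integral where `x ≠ 0`. -/
theorem system19_integral (x y z u : ℂ → ℂ)
    (hx : Differentiable ℂ x) (hy : Differentiable ℂ y)
    (hz : Differentiable ℂ z) (hu : Differentiable ℂ u)
    (hdx : ∀ τ, deriv x τ = (u τ + (y τ) ^ 2 + (z τ) ^ 2) * x τ)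
    (hdy : ∀ τ, deriv y τ = (u τ + (y τ) ^ 2 - 2 * (z τ) ^ 2) * y τ)
    (hdz : ∀ τ, deriv z τ = (u τ - 2 * (y τ) ^ 2 + (z τ) ^ 2) * z τ)
    (hdu : ∀ τ, deriv u τ = (u τ) ^ 2 - (y τ) ^ 4 + (y τ) ^ 2 * (z τ) ^ 2 - (z τ) ^ 4) :
    ∀ τ, x τ ≠ 0 →
      deriv (fun τ => ((y τ) ^ 2 - (z τ) ^ 2) / (x τ) ^ 2) τ = 0 :=
  system19_integral_general x y z u hx hy hz hdx hdy hdz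
end

section
/- Let x, y, z, u : ℂ → ℂ satisfy the system x' = (u + y² + z²)x, y' = (u + y² - 2z²)y, z' = (u - 2y² + z²)z, u' = u² - y⁴ + y²z² - z⁴. Then u satisfies the Chazy equation u''' = 6(2 u u'' - 3 (u')²). -/
open Complex

/-!
With `P = y²`, `Q = z²` and `e₁ = P + Q`, `e₂ = Q - 2P`, `e₃ = P - 2Q` (so `e₁ + e₂ + e₃ = 0`),
the quantities `w = (e₁² + e₂² + e₃²) / 6 = P² - PQ + Q²` and `v = -e₁e₂e₃` close up with `u` into
the Ramanujan-type system `u' = u² - w`, `w' = 4uw + 2v`, `v' = 6uv + 12w²`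
(the relations satisfied by `E₂, E₄, E₆` up to normalisation).
Eliminating `w` and `v` from this system gives the Chazy equation for `u`.
-/

section

variable {𝕜 : Type*} [NontriviallyNormedField 𝕜] {u w v : 𝕜 → 𝕜}

theorem hasDerivAt_sq_of_hasDerivAt_eq_mul {y : 𝕜 → 𝕜} {a t : 𝕜} (hy : HasDerivAt y (a * y t) t) :
    HasDerivAt (fun s => y s ^ 2) (2 * a * y t ^ 2) t :=
  (hy.fun_pow 2).congr_deriv (by ring)

theorem deriv_deriv_eq_of_ramanujan (hu : ∀ t, HasDerivAt u (u t ^ 2 - w t) t)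
    (hw : ∀ t, HasDerivAt w (4 * u t * w t + 2 * v t) t) :
    deriv (deriv u) = fun t => 2 * u t ^ 3 - 6 * u t * w t - 2 * v t := by
  have hu' : deriv u = fun t => u t ^ 2 - w t := funext fun t => (hu t).deriv
  funext t
  rw [hu']
  exact (((hu t).fun_pow 2).sub (hw t)).deriv.trans (by ring)

theorem chazy_of_ramanujan (hu : ∀ t, HasDerivAt u (u t ^ 2 - w t) t)
    (hw : ∀ t, HasDerivAt w (4 * u t * w t + 2 * v t) t)
    (hv : ∀ t, HasDerivAt v (6 * u t * v t + 12 * w t ^ 2) t) (t : 𝕜) :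
    deriv (deriv (deriv u)) t = 6 * (2 * u t * deriv (deriv u) t - 3 * deriv u t ^ 2) := by
  have hu'' := deriv_deriv_eq_of_ramanujan hu hw
  have hu''' : HasDerivAt (fun t => 2 * u t ^ 3 - 6 * u t * w t - 2 * v t) _ t :=
    ((((hu t).fun_pow 3).const_mul 2).sub (((hu t).const_mul 6).mul (hw t))).sub
      ((hv t).const_mul 2)
  rw [hu'', hu'''.deriv, (hu t).deriv]
  ring

variable {P Q : 𝕜 → 𝕜} (hP : ∀ t, HasDerivAt P (2 * (u t + P t - 2 * Q t) * P t) t)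
  (hQ : ∀ t, HasDerivAt Q (2 * (u t - 2 * P t + Q t) * Q t) t)
include hP hQ

theorem hasDerivAt_sq_sub_mul_add_sq (t : 𝕜) :
    HasDerivAt (fun t => P t ^ 2 - P t * Q t + Q t ^ 2)
      (4 * u t * (P t ^ 2 - P t * Q t + Q t ^ 2)
        + 2 * ((P t + Q t) * (2 * P t - Q t) * (P t - 2 * Q t))) t :=
  ((((hP t).fun_pow 2).sub ((hP t).fun_mul (hQ t))).add ((hQ t).fun_pow 2)).congr_deriv
    (by ring)

theorem hasDerivAt_add_mul_sub_mul_sub (t : 𝕜) :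
    HasDerivAt (fun t => (P t + Q t) * (2 * P t - Q t) * (P t - 2 * Q t))
      (6 * u t * ((P t + Q t) * (2 * P t - Q t) * (P t - 2 * Q t))
        + 12 * (P t ^ 2 - P t * Q t + Q t ^ 2) ^ 2) t :=
  ((((hP t).fun_add (hQ t)).fun_mul (((hP t).const_mul 2).fun_sub (hQ t))).fun_mul
    ((hP t).fun_sub ((hQ t).const_mul 2))).congr_deriv (by ring)

end

theorem system19_chazy_general (y z u : ℂ → ℂ)
    (hy : Differentiable ℂ y)
    (hz : Differentiable ℂ z) (hu : Differentiable ℂ u)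
    (hdy : ∀ τ, deriv y τ = (u τ + (y τ) ^ 2 - 2 * (z τ) ^ 2) * y τ)
    (hdz : ∀ τ, deriv z τ = (u τ - 2 * (y τ) ^ 2 + (z τ) ^ 2) * z τ)
    (hdu : ∀ τ, deriv u τ = (u τ) ^ 2 - (y τ) ^ 4 + (y τ) ^ 2 * (z τ) ^ 2 - (z τ) ^ 4) :
    ∀ τ, deriv (deriv (deriv u)) τ =
      6 * (2 * u τ * deriv (deriv u) τ - 3 * (deriv u τ) ^ 2) := by
  have hP τ := hasDerivAt_sq_of_hasDerivAt_eq_mul ((hy τ).hasDerivAt.congr_deriv (hdy τ))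
  have hQ τ := hasDerivAt_sq_of_hasDerivAt_eq_mul ((hz τ).hasDerivAt.congr_deriv (hdz τ))
  have hu' τ : HasDerivAt u
      (u τ ^ 2 - ((y τ ^ 2) ^ 2 - y τ ^ 2 * z τ ^ 2 + (z τ ^ 2) ^ 2)) τ :=
    (hu τ).hasDerivAt.congr_deriv (by rw [hdu]; ring)
  exact chazy_of_ramanujan hu' (hasDerivAt_sq_sub_mul_add_sq hP hQ)
    (hasDerivAt_add_mul_sub_mul_sub hP hQ)

/-- System (19): `u` satisfies the Chazy equation. -/
theorem system19_chazy (x y z u : ℂ → ℂ)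
    (hx : Differentiable ℂ x) (hy : Differentiable ℂ y)
    (hz : Differentiable ℂ z) (hu : Differentiable ℂ u)
    (hdx : ∀ τ, deriv x τ = (u τ + (y τ) ^ 2 + (z τ) ^ 2) * x τ)
    (hdy : ∀ τ, deriv y τ = (u τ + (y τ) ^ 2 - 2 * (z τ) ^ 2) * y τ)
    (hdz : ∀ τ, deriv z τ = (u τ - 2 * (y τ) ^ 2 + (z τ) ^ 2) * z τ)
    (hdu : ∀ τ, deriv u τ = (u τ) ^ 2 - (y τ) ^ 4 + (y τ) ^ 2 * (z τ) ^ 2 - (z τ) ^ 4) :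
    ∀ τ, deriv (deriv (deriv u)) τ =
      6 * (2 * u τ * deriv (deriv u) τ - 3 * (deriv u τ) ^ 2) :=
  system19_chazy_general y z u hy hz hu hdy hdz hdu
end

section
/- Let x, y, z, u : ℂ → ℂ satisfy the system x' = (u + y² + z²)x, y' = (u + y² - 2z²)y, z' = (u - 2y² + z²)z, u' = u² - y⁴ + y²z² - z⁴, and define X = u + y² + z², Y = u + y² - 2z², Z = u - 2y² + z². Then (X, Y, Z) satisfies the Darboux–Halphen system X' = (Y+Z)X - YZ, Y' = (X+Z)Y - XZ, Z' = (X+Y)Z - XY. -/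
/-! `X, Y, Z` are linear combinations of `u`, `y²`, `z²`. Since
`(y²)' = 2 y y'` and `(z²)' = 2 z z'`, system (19) makes `(u, y², z²)` satisfy a closed polynomial
system, and the Darboux–Halphen equations become polynomial identities in `u, y, z`. -/

theorem deriv_add_mul_sq_add_mul_sq {𝕜 : Type*} [NontriviallyNormedField 𝕜] {u y z : 𝕜 → 𝕜}
    {τ : 𝕜} (c d : 𝕜) (hu : DifferentiableAt 𝕜 u τ) (hy : DifferentiableAt 𝕜 y τ)
    (hz : DifferentiableAt 𝕜 z τ) :
    deriv (fun t => u t + c * y t ^ 2 + d * z t ^ 2) τ =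
      deriv u τ + c * (2 * y τ * deriv y τ) + d * (2 * z τ * deriv z τ) := by
  have h := (hu.hasDerivAt.add ((hy.hasDerivAt.pow 2).const_mul c)).add
    ((hz.hasDerivAt.pow 2).const_mul d)
  exact h.deriv.trans (by push_cast; ring)

theorem system19_darboux_halphen_general (y z u X Y Z : ℂ → ℂ)
    (hy : Differentiable ℂ y)
    (hz : Differentiable ℂ z) (hu : Differentiable ℂ u)
    (hdy : ∀ τ, deriv y τ = (u τ + (y τ) ^ 2 - 2 * (z τ) ^ 2) * y τ)
    (hdz : ∀ τ, deriv z τ = (u τ - 2 * (y τ) ^ 2 + (z τ) ^ 2) * z τ)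
    (hdu : ∀ τ, deriv u τ = (u τ) ^ 2 - (y τ) ^ 4 + (y τ) ^ 2 * (z τ) ^ 2 - (z τ) ^ 4)
    (hX : ∀ τ, X τ = u τ + (y τ) ^ 2 + (z τ) ^ 2)
    (hY : ∀ τ, Y τ = u τ + (y τ) ^ 2 - 2 * (z τ) ^ 2)
    (hZ : ∀ τ, Z τ = u τ - 2 * (y τ) ^ 2 + (z τ) ^ 2) :
    (∀ τ, deriv X τ = (Y τ + Z τ) * X τ - Y τ * Z τ) ∧
    (∀ τ, deriv Y τ = (X τ + Z τ) * Y τ - X τ * Z τ) ∧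
    (∀ τ, deriv Z τ = (X τ + Y τ) * Z τ - X τ * Y τ) := by
  have hX' : X = fun t => u t + 1 * y t ^ 2 + 1 * z t ^ 2 := funext fun t => by rw [hX]; ring
  have hY' : Y = fun t => u t + 1 * y t ^ 2 + -2 * z t ^ 2 := funext fun t => by rw [hY]; ring
  have hZ' : Z = fun t => u t + -2 * y t ^ 2 + 1 * z t ^ 2 := funext fun t => by rw [hZ]; ring
  refine ⟨fun τ => ?_, fun τ => ?_, fun τ => ?_⟩ <;>
  · simp only [hX', hY', hZ', deriv_add_mul_sq_add_mul_sq _ _ (hu τ) (hy τ) (hz τ), hdu, hdy, hdz]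
    ring

/-- System (19) implies the Darboux–Halphen system for `X, Y, Z` defined by (41). -/
theorem system19_darboux_halphen (x y z u X Y Z : ℂ → ℂ)
    (hx : Differentiable ℂ x) (hy : Differentiable ℂ y)
    (hz : Differentiable ℂ z) (hu : Differentiable ℂ u)
    (hdx : ∀ τ, deriv x τ = (u τ + (y τ) ^ 2 + (z τ) ^ 2) * x τ)
    (hdy : ∀ τ, deriv y τ = (u τ + (y τ) ^ 2 - 2 * (z τ) ^ 2) * y τ)
    (hdz : ∀ τ, deriv z τ = (u τ - 2 * (y τ) ^ 2 + (z τ) ^ 2) * z τ)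
    (hdu : ∀ τ, deriv u τ = (u τ) ^ 2 - (y τ) ^ 4 + (y τ) ^ 2 * (z τ) ^ 2 - (z τ) ^ 4)
    (hX : ∀ τ, X τ = u τ + (y τ) ^ 2 + (z τ) ^ 2)
    (hY : ∀ τ, Y τ = u τ + (y τ) ^ 2 - 2 * (z τ) ^ 2)
    (hZ : ∀ τ, Z τ = u τ - 2 * (y τ) ^ 2 + (z τ) ^ 2) :
    (∀ τ, deriv X τ = (Y τ + Z τ) * X τ - Y τ * Z τ) ∧
    (∀ τ, deriv Y τ = (X τ + Z τ) * Y τ - X τ * Z τ) ∧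
    (∀ τ, deriv Z τ = (X τ + Y τ) * Z τ - X τ * Y τ) :=
  system19_darboux_halphen_general y z u X Y Z hy hz hu hdy hdz hdu hX hY hZ
end

section
/- Let K, K', E, E' : ℂ → ℂ be differentiable functions of k satisfying dK/dk = -K/k - E/((k²-1)k), dE/dk = -K/k + E/k, dK'/dk = kK'/(1-k²) + E'/((k²-1)k), dE'/dk = kK'/(1-k²) + kE'/(k²-1). Then the function K·E' + K'·E - K·K' has vanishing k-derivative (on the domain k ≠ 0, k² ≠ 1). -/
open Complex

/-! By the product rule, the derivative of `K E' + K' E - K K'` is a bilinear expression in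
`K, E, K', E'` and their derivatives. Substituting the system (28) for the derivatives turns it into
a combination of `K E', K' E, K K', E E'` whose coefficients, rational functions of `k`, all
vanish identically. -/

theorem legendre_combination_deriv_eq_zero {𝕜 : Type*} [Field 𝕜]
    {k K E K' E' dK dE dK' dE' : 𝕜} (hk : k ≠ 0) (hk2 : k ^ 2 ≠ 1)
    (hdK : dK = -K / k - E / ((k ^ 2 - 1) * k)) (hdE : dE = -K / k + E / k)
    (hdK' : dK' = k * K' / (1 - k ^ 2) + E' / ((k ^ 2 - 1) * k))
    (hdE' : dE' = k * K' / (1 - k ^ 2) + k * E' / (k ^ 2 - 1)) :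
    dK * E' + K * dE' + (dK' * E + K' * dE) - (dK * K' + K * dK') = 0 := by
  have h₁ : k ^ 2 - 1 ≠ 0 := sub_ne_zero.mpr hk2
  have h₂ : 1 - k ^ 2 ≠ 0 := sub_ne_zero.mpr hk2.symm
  subst hdK hdE hdK' hdE'
  field_simp
  ring

/-- The Legendre combination `KE' + K'E - KK'` is a first integral of the
closed system (28). -/
theorem legendre_integral (K K' E E' : ℂ → ℂ)
    (hK : Differentiable ℂ K) (hK' : Differentiable ℂ K')
    (hE : Differentiable ℂ E) (hE' : Differentiable ℂ E')
    (hdK : ∀ k : ℂ, k ≠ 0 → k ^ 2 ≠ 1 →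
      deriv K k = -K k / k - E k / ((k ^ 2 - 1) * k))
    (hdE : ∀ k : ℂ, k ≠ 0 → k ^ 2 ≠ 1 →
      deriv E k = -K k / k + E k / k)
    (hdK' : ∀ k : ℂ, k ≠ 0 → k ^ 2 ≠ 1 →
      deriv K' k = k * K' k / (1 - k ^ 2) + E' k / ((k ^ 2 - 1) * k))
    (hdE' : ∀ k : ℂ, k ≠ 0 → k ^ 2 ≠ 1 →
      deriv E' k = k * K' k / (1 - k ^ 2) + k * E' k / (k ^ 2 - 1)) :
    ∀ k : ℂ, k ≠ 0 → k ^ 2 ≠ 1 →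
      deriv (fun k => K k * E' k + K' k * E k - K k * K' k) k = 0 := by
  intro k hk hk2
  have hL : HasDerivAt (fun k => K k * E' k + K' k * E k - K k * K' k) _ k :=
    (((hK k).hasDerivAt.mul (hE' k).hasDerivAt).add
      ((hK' k).hasDerivAt.mul (hE k).hasDerivAt)).sub ((hK k).hasDerivAt.mul (hK' k).hasDerivAt)
  rw [hL.deriv]
  exact legendre_combination_deriv_eq_zero hk hk2
    (hdK k hk hk2) (hdE k hk hk2) (hdK' k hk hk2) (hdE' k hk hk2)
end

section
/- Let t₂, t₃, t₄, η : ℂ → ℂ satisfy the symmetrical system (8): t₂' = (i/π){η + (π²/12)(t₃⁴ + t₄⁴)}t₂, t₃' = (i/π){η + (π²/12)(t₂⁴ - t₄⁴)}t₃, t₄' = (i/π){η - (π²/12)(t₂⁴ + t₃⁴)}t₄, η' = (i/π){2η² - (π⁴/144)(t₂⁸ + t₃⁸ + t₄⁸)}. Then wherever t₂t₃t₄ ≠ 0, the function U := (t₃⁴ - t₂⁴ - t₄⁴)³/(t₂⁴t₃⁴t₄⁴) has vanishing derivative. -/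
/-!
Write `A, B, C` for `t₂⁴, t₃⁴, t₄⁴` and `k = i/π`. The system gives the logarithmic derivatives
`A'/A = 4k(η + c(B + C))`, `B'/B = 4k(η + c(A - C))`, `C'/C = 4k(η - c(A + B))` with `c = π²/12`.
In `(B - A - C)'` and in `(ABC)'/(ABC)` the `c`-terms cancel, leaving
`(B - A - C)' = 4kη (B - A - C)` and `(ABC)' = 3 · 4kη · ABC`, so the cube of the first over the
second has derivative zero.
-/

open Complex

section LogDeriv

variable {𝕜 : Type*} [NontriviallyNormedField 𝕜] {f g : 𝕜 → 𝕜} {a x : 𝕜}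

theorem HasDerivAt.pow_of_eq_mul (hf : HasDerivAt f (a * f x) x) (n : ℕ) :
    HasDerivAt (fun y => f y ^ n) (n * a * f x ^ n) x := by
  refine (hf.fun_pow n).congr_deriv ?_
  rcases n with _ | n
  · simp
  · rw [Nat.add_sub_cancel, pow_succ]; ring

theorem hasDerivAt_pow_div_zero_of_eq_mul (n : ℕ) (hf : HasDerivAt f (a * f x) x)
    (hg : HasDerivAt g (n * a * g x) x) (hgx : g x ≠ 0) :
    HasDerivAt (fun y => f y ^ n / g y) 0 x :=
  ((hf.pow_of_eq_mul n).fun_div hg hgx).congr_deriv (by ring)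

end LogDeriv

section ThetaSystem

variable {𝕜 : Type*} [NontriviallyNormedField 𝕜] {t₂ t₃ t₄ : 𝕜 → 𝕜} {k e c x : 𝕜}

theorem hasDerivAt_jacobi_difference
    (h2 : HasDerivAt t₂ (k * (e + c * (t₃ x ^ 4 + t₄ x ^ 4)) * t₂ x) x)
    (h3 : HasDerivAt t₃ (k * (e + c * (t₂ x ^ 4 - t₄ x ^ 4)) * t₃ x) x)
    (h4 : HasDerivAt t₄ (k * (e - c * (t₂ x ^ 4 + t₃ x ^ 4)) * t₄ x) x) :
    HasDerivAt (fun y => t₃ y ^ 4 - t₂ y ^ 4 - t₄ y ^ 4)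
      (4 * k * e * (t₃ x ^ 4 - t₂ x ^ 4 - t₄ x ^ 4)) x :=
  (((h3.pow_of_eq_mul 4).fun_sub (h2.pow_of_eq_mul 4)).fun_sub (h4.pow_of_eq_mul 4)).congr_deriv
    (by push_cast; ring)

theorem hasDerivAt_jacobi_product
    (h2 : HasDerivAt t₂ (k * (e + c * (t₃ x ^ 4 + t₄ x ^ 4)) * t₂ x) x)
    (h3 : HasDerivAt t₃ (k * (e + c * (t₂ x ^ 4 - t₄ x ^ 4)) * t₃ x) x)
    (h4 : HasDerivAt t₄ (k * (e - c * (t₂ x ^ 4 + t₃ x ^ 4)) * t₄ x) x) :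
    HasDerivAt (fun y => t₂ y ^ 4 * t₃ y ^ 4 * t₄ y ^ 4)
      ((3 : ℕ) * (4 * k * e) * (t₂ x ^ 4 * t₃ x ^ 4 * t₄ x ^ 4)) x :=
  (((h2.pow_of_eq_mul 4).fun_mul (h3.pow_of_eq_mul 4)).fun_mul (h4.pow_of_eq_mul 4)).congr_deriv
    (by push_cast; ring)

end ThetaSystem

theorem symmetric_system_integral_general (t₂ t₃ t₄ η : ℂ → ℂ)
    (h2 : Differentiable ℂ t₂) (h3 : Differentiable ℂ t₃)
    (h4 : Differentiable ℂ t₄)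
    (hd2 : ∀ τ, deriv t₂ τ = (Complex.I / (Real.pi : ℂ)) *
      (η τ + ((Real.pi : ℂ) ^ 2 / 12) * ((t₃ τ) ^ 4 + (t₄ τ) ^ 4)) * t₂ τ)
    (hd3 : ∀ τ, deriv t₃ τ = (Complex.I / (Real.pi : ℂ)) *
      (η τ + ((Real.pi : ℂ) ^ 2 / 12) * ((t₂ τ) ^ 4 - (t₄ τ) ^ 4)) * t₃ τ)
    (hd4 : ∀ τ, deriv t₄ τ = (Complex.I / (Real.pi : ℂ)) *
      (η τ - ((Real.pi : ℂ) ^ 2 / 12) * ((t₂ τ) ^ 4 + (t₃ τ) ^ 4)) * t₄ τ) :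
    ∀ τ, t₂ τ * t₃ τ * t₄ τ ≠ 0 →
      deriv (fun τ => ((t₃ τ) ^ 4 - (t₂ τ) ^ 4 - (t₄ τ) ^ 4) ^ 3 /
        ((t₂ τ) ^ 4 * (t₃ τ) ^ 4 * (t₄ τ) ^ 4)) τ = 0 := by
  intro τ hτ
  have D2 := hd2 τ ▸ (h2 τ).hasDerivAt
  have D3 := hd3 τ ▸ (h3 τ).hasDerivAt
  have D4 := hd4 τ ▸ (h4 τ).hasDerivAt
  have hD : t₂ τ ^ 4 * t₃ τ ^ 4 * t₄ τ ^ 4 ≠ 0 := by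
    simpa only [mul_pow] using pow_ne_zero 4 hτ
  exact (hasDerivAt_pow_div_zero_of_eq_mul 3 (hasDerivAt_jacobi_difference D2 D3 D4)
    (hasDerivAt_jacobi_product D2 D3 D4) hD).deriv

/-- Proposition 2: the rational first integral (15) of the symmetrical
system (8). -/
theorem symmetric_system_integral (t₂ t₃ t₄ η : ℂ → ℂ)
    (h2 : Differentiable ℂ t₂) (h3 : Differentiable ℂ t₃)
    (h4 : Differentiable ℂ t₄) (hη : Differentiable ℂ η)
    (hd2 : ∀ τ, deriv t₂ τ = (Complex.I / (Real.pi : ℂ)) *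
      (η τ + ((Real.pi : ℂ) ^ 2 / 12) * ((t₃ τ) ^ 4 + (t₄ τ) ^ 4)) * t₂ τ)
    (hd3 : ∀ τ, deriv t₃ τ = (Complex.I / (Real.pi : ℂ)) *
      (η τ + ((Real.pi : ℂ) ^ 2 / 12) * ((t₂ τ) ^ 4 - (t₄ τ) ^ 4)) * t₃ τ)
    (hd4 : ∀ τ, deriv t₄ τ = (Complex.I / (Real.pi : ℂ)) *
      (η τ - ((Real.pi : ℂ) ^ 2 / 12) * ((t₂ τ) ^ 4 + (t₃ τ) ^ 4)) * t₄ τ)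
    (hdη : ∀ τ, deriv η τ = (Complex.I / (Real.pi : ℂ)) *
      (2 * (η τ) ^ 2 - ((Real.pi : ℂ) ^ 4 / 144) *
        ((t₂ τ) ^ 8 + (t₃ τ) ^ 8 + (t₄ τ) ^ 8))) :
    ∀ τ, t₂ τ * t₃ τ * t₄ τ ≠ 0 →
      deriv (fun τ => ((t₃ τ) ^ 4 - (t₂ τ) ^ 4 - (t₄ τ) ^ 4) ^ 3 /
        ((t₂ τ) ^ 4 * (t₃ τ) ^ 4 * (t₄ τ) ^ 4)) τ = 0 :=
  symmetric_system_integral_general t₂ t₃ t₄ η h2 h3 h4 hd2 hd3 hd4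
end

section
/- Let t₂, t₃, t₄, η satisfy the symmetrical system (8) and additionally assume the Jacobi identity t₃⁴ = t₂⁴ + t₄⁴ holds at all times. Define X = (2i/π){η + (π²/12)(t₃⁴ + t₄⁴)}, Y = (2i/π){η + (π²/12)(t₂⁴ - t₄⁴)}, Z = (2i/π){η - (π²/12)(t₂⁴ + t₃⁴)}. Then (X,Y,Z) satisfies the Darboux–Halphen system X' = (Y+Z)X - YZ, Y' = (X+Z)Y - XZ, Z' = (X+Y)Z - XY. -/
/-!
In the variables `s = (2i/π) η` and `p, q, r = (iπ/6) t₂⁴, t₃⁴, t₄⁴` one has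
`X = s + q + r`, `Y = s + p - r`, `Z = s - p - q`, and the symmetrical system (8) becomes
`p' = 2Xp`, `q' = 2Yq`, `r' = 2Zr`, `s' = s² - (p² + q² + r²)/2`: the first three because
`t₂'/t₂ = X/2`, `t₃'/t₃ = Y/2`, `t₄'/t₄ = Z/2`. On Jacobi's level surface `q = p + r`, and the
Darboux–Halphen equations are then polynomial identities.
-/

open Complex

variable {𝕜 : Type*} [NontriviallyNormedField 𝕜]

theorem HasDerivAt.const_mul_pow_of_eq_mul {t : 𝕜 → 𝕜} {w τ : 𝕜} (a : 𝕜) (n : ℕ)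
    (ht : HasDerivAt t (w * t τ) τ) :
    HasDerivAt (fun x => a * t x ^ n) (n * w * (a * t τ ^ n)) τ := by
  refine ((ht.pow n).const_mul a).congr_deriv ?_
  rcases n with _ | n
  · simp
  · rw [add_tsub_cancel_right]
    ring

theorem darboux_halphen_of_potentials [CharZero 𝕜] {X Y Z p q r s : 𝕜 → 𝕜}
    (hX : ∀ τ, X τ = s τ + q τ + r τ) (hY : ∀ τ, Y τ = s τ + p τ - r τ)
    (hZ : ∀ τ, Z τ = s τ - p τ - q τ)
    (hp : ∀ τ, HasDerivAt p (2 * X τ * p τ) τ) (hq : ∀ τ, HasDerivAt q (2 * Y τ * q τ) τ)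
    (hr : ∀ τ, HasDerivAt r (2 * Z τ * r τ) τ)
    (hs : ∀ τ, HasDerivAt s (s τ ^ 2 - (p τ ^ 2 + q τ ^ 2 + r τ ^ 2) / 2) τ)
    (hjac : ∀ τ, q τ = p τ + r τ) :
    (∀ τ, deriv X τ = (Y τ + Z τ) * X τ - Y τ * Z τ) ∧
    (∀ τ, deriv Y τ = (X τ + Z τ) * Y τ - X τ * Z τ) ∧
    (∀ τ, deriv Z τ = (X τ + Y τ) * Z τ - X τ * Y τ) := by
  obtain rfl : X = fun τ => s τ + q τ + r τ := funext hX
  obtain rfl : Y = fun τ => s τ + p τ - r τ := funext hY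
  obtain rfl : Z = fun τ => s τ - p τ - q τ := funext hZ
  refine ⟨fun τ => ?_, fun τ => ?_, fun τ => ?_⟩
  · refine (((hs τ).add (hq τ)).add (hr τ)).deriv.trans ?_
    linear_combination (3 * p τ + q τ - r τ) / 2 * hjac τ
  · refine (((hs τ).add (hp τ)).sub (hr τ)).deriv.trans ?_
    linear_combination -(p τ + 3 * q τ + r τ) / 2 * hjac τ
  · refine (((hs τ).sub (hp τ)).sub (hq τ)).deriv.trans ?_
    linear_combination (q τ + 3 * r τ - p τ) / 2 * hjac τ

/-- On the level surface given by Jacobi's identity, the symmetrical system (8)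
reduces to the Darboux–Halphen system. -/
theorem symmetric_system_darboux_halphen (t₂ t₃ t₄ η X Y Z : ℂ → ℂ)
    (h2 : Differentiable ℂ t₂) (h3 : Differentiable ℂ t₃)
    (h4 : Differentiable ℂ t₄) (hη : Differentiable ℂ η)
    (hd2 : ∀ τ, deriv t₂ τ = (Complex.I / (Real.pi : ℂ)) *
      (η τ + ((Real.pi : ℂ) ^ 2 / 12) * ((t₃ τ) ^ 4 + (t₄ τ) ^ 4)) * t₂ τ)
    (hd3 : ∀ τ, deriv t₃ τ = (Complex.I / (Real.pi : ℂ)) *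
      (η τ + ((Real.pi : ℂ) ^ 2 / 12) * ((t₂ τ) ^ 4 - (t₄ τ) ^ 4)) * t₃ τ)
    (hd4 : ∀ τ, deriv t₄ τ = (Complex.I / (Real.pi : ℂ)) *
      (η τ - ((Real.pi : ℂ) ^ 2 / 12) * ((t₂ τ) ^ 4 + (t₃ τ) ^ 4)) * t₄ τ)
    (hdη : ∀ τ, deriv η τ = (Complex.I / (Real.pi : ℂ)) *
      (2 * (η τ) ^ 2 - ((Real.pi : ℂ) ^ 4 / 144) *
        ((t₂ τ) ^ 8 + (t₃ τ) ^ 8 + (t₄ τ) ^ 8)))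
    (hjac : ∀ τ, (t₃ τ) ^ 4 = (t₂ τ) ^ 4 + (t₄ τ) ^ 4)
    (hX : ∀ τ, X τ = (2 * Complex.I / (Real.pi : ℂ)) *
      (η τ + ((Real.pi : ℂ) ^ 2 / 12) * ((t₃ τ) ^ 4 + (t₄ τ) ^ 4)))
    (hY : ∀ τ, Y τ = (2 * Complex.I / (Real.pi : ℂ)) *
      (η τ + ((Real.pi : ℂ) ^ 2 / 12) * ((t₂ τ) ^ 4 - (t₄ τ) ^ 4)))
    (hZ : ∀ τ, Z τ = (2 * Complex.I / (Real.pi : ℂ)) *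
      (η τ - ((Real.pi : ℂ) ^ 2 / 12) * ((t₂ τ) ^ 4 + (t₃ τ) ^ 4))) :
    (∀ τ, deriv X τ = (Y τ + Z τ) * X τ - Y τ * Z τ) ∧
    (∀ τ, deriv Y τ = (X τ + Z τ) * Y τ - X τ * Z τ) ∧
    (∀ τ, deriv Z τ = (X τ + Y τ) * Z τ - X τ * Y τ) := by
  have hπ : (Real.pi : ℂ) ≠ 0 := ofReal_ne_zero.mpr Real.pi_ne_zero
  have hlog₂ : ∀ τ, HasDerivAt t₂ (X τ / 2 * t₂ τ) τ := fun τ =>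
    (h2 τ).hasDerivAt.congr_deriv (by rw [hd2, hX]; ring)
  have hlog₃ : ∀ τ, HasDerivAt t₃ (Y τ / 2 * t₃ τ) τ := fun τ =>
    (h3 τ).hasDerivAt.congr_deriv (by rw [hd3, hY]; ring)
  have hlog₄ : ∀ τ, HasDerivAt t₄ (Z τ / 2 * t₄ τ) τ := fun τ =>
    (h4 τ).hasDerivAt.congr_deriv (by rw [hd4, hZ]; ring)
  refine darboux_halphen_of_potentials (s := fun τ => 2 * I / Real.pi * η τ)
    (p := fun τ => I * Real.pi / 6 * t₂ τ ^ 4) (q := fun τ => I * Real.pi / 6 * t₃ τ ^ 4)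
    (r := fun τ => I * Real.pi / 6 * t₄ τ ^ 4) (fun τ => ?_) (fun τ => ?_) (fun τ => ?_)
    (fun τ => ?_) (fun τ => ?_) (fun τ => ?_) (fun τ => ?_) (fun τ => ?_)
  · rw [hX]; field_simp; ring
  · rw [hY]; field_simp; ring
  · rw [hZ]; field_simp; ring
  · exact ((hlog₂ τ).const_mul_pow_of_eq_mul _ 4).congr_deriv (by push_cast; ring)
  · exact ((hlog₃ τ).const_mul_pow_of_eq_mul _ 4).congr_deriv (by push_cast; ring)
  · exact ((hlog₄ τ).const_mul_pow_of_eq_mul _ 4).congr_deriv (by push_cast; ring)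
  · refine ((hη τ).hasDerivAt.const_mul (2 * I / Real.pi)).congr_deriv ?_
    rw [hdη]; field_simp; ring
  · linear_combination I * Real.pi / 6 * hjac τ
end

section
/- Let V : ℂ⁴ → ℂ⁴ be the vector field of the Jacobi system, V(A,B,a,b) = (2A²B, bA³, -16bA², abA²). If Ω is a constant antisymmetric 4×4 complex matrix such that Ω·(DV)(Y) is symmetric for every Y ∈ ℂ⁴, then Ω = 0. -/
/-!
Whether `Ω * M` is symmetric is a linear condition on `M`, so it holds on the whole span of the
values of the Jacobian. That span contains the matrix units `Eₖₗ = single k l 1` for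
`kl = 00, 13, 20, 33`, and symmetry of `Ω * Eₖₗ` kills column `k` of `Ω` outside row `l`.
The remaining entry `Ω l k` is killed by a second matrix of the span whose column `l` vanishes
and one of whose columns is a nonzero multiple of `eₖ`.
-/

open Matrix Complex

/-- The Jacobian matrix of the vector field of Jacobi's system (9). -/
def DVJacobi (A B a b : ℂ) : Matrix (Fin 4) (Fin 4) ℂ :=
  !![4 * A * B, 2 * A ^ 2, 0, 0;
     3 * b * A ^ 2, 0, 0, A ^ 3;
     -32 * b * A, 0, 0, -16 * A ^ 2;
     2 * a * b * A, 0, b * A ^ 2, a * A ^ 2]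

open Submodule

namespace Matrix

variable {n R : Type*} [Fintype n]

def isSymmMulSubmodule [CommSemiring R] (Ω : Matrix n n R) : Submodule R (Matrix n n R) where
  carrier := {M | (Ω * M).IsSymm}
  add_mem' {M N} hM hN := by rw [Set.mem_ofPred_eq, Matrix.mul_add]; exact hM.add hN
  zero_mem' := by rw [Set.mem_ofPred_eq, Matrix.mul_zero]; exact isSymm_zero
  smul_mem' c M hM := by rw [Set.mem_ofPred_eq, Matrix.mul_smul]; exact hM.smul c

theorem apply_eq_zero_of_isSymm_mul [Semiring R] [NoZeroDivisors R] {Ω M : Matrix n n R}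
    {i j k : n} (h : (Ω * M).IsSymm) (hi : ∀ k', M k' i = 0) (hj : ∀ k' ≠ k, M k' j = 0)
    (hkj : M k j ≠ 0) : Ω i k = 0 := by
  have hji : (Ω * M) j i = 0 := by simp [mul_apply, hi]
  have hij : (Ω * M) i j = Ω i k * M k j :=
    mul_apply.trans <| Finset.sum_eq_single k (fun k' _ hk' => by simp [hj k' hk']) (by simp)
  rw [← h.apply i j, hji] at hij
  exact (mul_eq_zero.1 hij.symm).resolve_right hkj

theorem apply_eq_zero_of_isSymm_mul_single [Semiring R] [NoZeroDivisors R] [Nontrivial R]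
    [DecidableEq n] {Ω M : Matrix n n R} {j k l : n} (hkl : (Ω * single k l 1).IsSymm)
    (hM : (Ω * M).IsSymm) (hl : ∀ k', M k' l = 0) (hj : ∀ k' ≠ k, M k' j = 0)
    (hkj : M k j ≠ 0) (i : n) : Ω i k = 0 := by
  by_cases hil : i = l
  · exact hil ▸ apply_eq_zero_of_isSymm_mul hM hl hj hkj
  · refine apply_eq_zero_of_isSymm_mul (j := l) hkl
      (fun k' => single_apply_of_col_ne _ _ (Ne.symm hil) _)
      (fun k' hk' => single_apply_of_row_ne (Ne.symm hk') _ _ _) ?_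
    simp

end Matrix

def jacobiSpan : Submodule ℂ (Matrix (Fin 4) (Fin 4) ℂ) :=
  span ℂ {M | ∃ A B a b, DVJacobi A B a b = M}

theorem DVJacobi_mem_jacobiSpan (A B a b : ℂ) : DVJacobi A B a b ∈ jacobiSpan :=
  subset_span ⟨A, B, a, b, rfl⟩

/- `DVJacobi A B a b` expands as
  `AB • 4E₀₀ + A² • (2E₀₁ - 16E₂₃) + A³ • E₁₃ + A²b • (3E₁₀ + E₃₂) - Ab • 32E₂₀`
  `+ aA² • E₃₃ + abA • 2E₃₀`;
each coefficient below is extracted by a finite difference. -/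

theorem single_zero_zero_mem_jacobiSpan : single 0 0 1 ∈ jacobiSpan := by
  convert smul_mem _ (4⁻¹ : ℂ)
    (sub_mem (DVJacobi_mem_jacobiSpan 1 1 0 0) (DVJacobi_mem_jacobiSpan 1 0 0 0)) using 1
  ext i j; fin_cases i <;> fin_cases j <;> norm_num [DVJacobi, single_apply, Fin.ext_iff]

theorem single_one_three_mem_jacobiSpan : single 1 3 1 ∈ jacobiSpan := by
  convert smul_mem _ (2⁻¹ : ℂ)
    (sub_mem (DVJacobi_mem_jacobiSpan 1 0 0 0) (DVJacobi_mem_jacobiSpan (-1) 0 0 0)) using 1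
  ext i j; fin_cases i <;> fin_cases j <;> norm_num [DVJacobi, single_apply, Fin.ext_iff]

theorem single_two_zero_mem_jacobiSpan : single 2 0 1 ∈ jacobiSpan := by
  convert smul_mem _ (-64⁻¹ : ℂ) (sub_mem
    (sub_mem (DVJacobi_mem_jacobiSpan 1 0 0 1) (DVJacobi_mem_jacobiSpan (-1) 0 0 1))
    (sub_mem (DVJacobi_mem_jacobiSpan 1 0 0 0) (DVJacobi_mem_jacobiSpan (-1) 0 0 0))) using 1
  ext i j; fin_cases i <;> fin_cases j <;> norm_num [DVJacobi, single_apply, Fin.ext_iff]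

theorem single_three_three_mem_jacobiSpan : single 3 3 1 ∈ jacobiSpan := by
  convert sub_mem (DVJacobi_mem_jacobiSpan 1 0 1 0) (DVJacobi_mem_jacobiSpan 1 0 0 0) using 1
  ext i j; fin_cases i <;> fin_cases j <;> norm_num [DVJacobi, single_apply, Fin.ext_iff]

theorem single_three_zero_mem_jacobiSpan : single 3 0 1 ∈ jacobiSpan := by
  convert smul_mem _ (2⁻¹ : ℂ) (sub_mem
    (sub_mem (DVJacobi_mem_jacobiSpan 1 0 1 1) (DVJacobi_mem_jacobiSpan 1 0 1 0))
    (sub_mem (DVJacobi_mem_jacobiSpan 1 0 0 1) (DVJacobi_mem_jacobiSpan 1 0 0 0))) using 1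
  ext i j; fin_cases i <;> fin_cases j <;> norm_num [DVJacobi, single_apply, Fin.ext_iff]

theorem coeff_A_sq_mem_jacobiSpan :
    !![0, 2, 0, 0; 0, 0, 0, 0; 0, 0, 0, -16; 0, 0, 0, 0] ∈ jacobiSpan := by
  convert smul_mem _ (2⁻¹ : ℂ)
    (add_mem (DVJacobi_mem_jacobiSpan 1 0 0 0) (DVJacobi_mem_jacobiSpan (-1) 0 0 0)) using 1
  ext i j; fin_cases i <;> fin_cases j <;> norm_num [DVJacobi]

theorem coeff_A_sq_b_mem_jacobiSpan :
    !![0, 0, 0, 0; 3, 0, 0, 0; 0, 0, 0, 0; 0, 0, 1, 0] ∈ jacobiSpan := by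
  convert smul_mem _ (2⁻¹ : ℂ) (sub_mem
    (add_mem (DVJacobi_mem_jacobiSpan 1 0 0 1) (DVJacobi_mem_jacobiSpan (-1) 0 0 1))
    (add_mem (DVJacobi_mem_jacobiSpan 1 0 0 0) (DVJacobi_mem_jacobiSpan (-1) 0 0 0))) using 1
  ext i j; fin_cases i <;> fin_cases j <;> norm_num [DVJacobi]

theorem no_constant_bracket_jacobi_general (Ω : Matrix (Fin 4) (Fin 4) ℂ)
    (hsymm : ∀ A B a b : ℂ, (Ω * DVJacobi A B a b)ᵀ = Ω * DVJacobi A B a b) :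
    Ω = 0 := by
  have hspan {M} (hM : M ∈ jacobiSpan) : (Ω * M).IsSymm :=
    span_le (p := Ω.isSymmMulSubmodule).2 (by rintro _ ⟨A, B, a, b, rfl⟩; exact hsymm A B a b) hM
  ext i k
  fin_cases k
  · exact apply_eq_zero_of_isSymm_mul_single (j := 1)
      (hspan single_zero_zero_mem_jacobiSpan) (hspan coeff_A_sq_mem_jacobiSpan)
      (by simp [Fin.forall_fin_succ]) (by simp [Fin.forall_fin_succ]) (by simp) i
  · exact apply_eq_zero_of_isSymm_mul_single (j := 0)
      (hspan single_one_three_mem_jacobiSpan) (hspan coeff_A_sq_b_mem_jacobiSpan)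
      (by simp [Fin.forall_fin_succ]) (by simp [Fin.forall_fin_succ]) (by simp) i
  · exact apply_eq_zero_of_isSymm_mul_single (j := 3)
      (hspan single_two_zero_mem_jacobiSpan) (hspan coeff_A_sq_mem_jacobiSpan)
      (by simp [Fin.forall_fin_succ]) (by simp [Fin.forall_fin_succ]) (by simp) i
  · exact apply_eq_zero_of_isSymm_mul_single (j := 0)
      (hspan single_three_three_mem_jacobiSpan) (hspan single_three_zero_mem_jacobiSpan)
      (by simp) (by simp [single_apply, eq_comm]) (by simp) i

/-- Theorem 11 for Jacobi's system (9): no nonzero constant Poisson bracket. -/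
theorem no_constant_bracket_jacobi (Ω : Matrix (Fin 4) (Fin 4) ℂ)
    (hanti : Ωᵀ = -Ω)
    (hsymm : ∀ A B a b : ℂ, (Ω * DVJacobi A B a b)ᵀ = Ω * DVJacobi A B a b) :
    Ω = 0 :=
  no_constant_bracket_jacobi_general Ω hsymm
end
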